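/- arXiv:0812.0067 — 2 statements merged into one kernel-verified Lean document; each statement's English description precedes it below -/
import Mathlib

section
/- Let B be a set of monomials connected to 1 and F a rewriting family for B (each f ∈ F has support in B⁺ = B ∪ x_1 B ∪ ... ∪ x_n B, exactly one monomial γ(f) of its support lies in ∂B = B⁺ \ B, with coefficient 1, and distinct elements of F have distinct leading monomials). Let E be the set of monomials m such that for every decomposition m = x_{i_0}···x_{i_k} as a product of variables, the iterated reduction π_F(x_{i_0} π_F(x_{i_1} ··· π_F(x_{i_k})···)) is defined. Then E is stable under monomial division: if m ∈ E and m' divides m, then m' ∈ E. -/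
open MvPolynomial
open scoped Classical

abbrev Mon (n : ℕ) := Fin n →₀ ℕ

def prolong {n : ℕ} (B : Set (Mon n)) : Set (Mon n) :=
  B ∪ ⋃ i : Fin n, (fun m => Finsupp.single i 1 + m) '' B

def border {n : ℕ} (B : Set (Mon n)) : Set (Mon n) := prolong B \ B

noncomputable def varsSum {n : ℕ} (L : List (Fin n)) : Mon n :=
  (L.map fun i => Finsupp.single i 1).sum

def ConnectedTo1 {n : ℕ} (B : Set (Mon n)) : Prop :=
  0 ∈ B ∧ ∀ m ∈ B, ∃ L : List (Fin n), varsSum L = m ∧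
    ∀ L' : List (Fin n), L' <+: L → varsSum L' ∈ B

def degSum {n : ℕ} (m : Mon n) : ℕ := m.sum fun _ e => e
noncomputable def spanMon {n : ℕ} (K : Type) [Field K] (B : Set (Mon n)) :
    Submodule K (MvPolynomial (Fin n) K) :=
  Submodule.span K ((fun m => (monomial m (1 : K) : MvPolynomial (Fin n) K)) '' B)

noncomputable def piF {n : ℕ} {K : Type} [Field K] (B H : Set (Mon n))
    (ρ : Mon n → MvPolynomial (Fin n) K) (p : MvPolynomial (Fin n) K) :
    MvPolynomial (Fin n) K :=
  p.support.sum fun m =>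
    if m ∈ B then monomial m (p.coeff m)
    else if m ∈ H then p.coeff m • ρ m else 0

noncomputable def redList {n : ℕ} {K : Type} [Field K] (B H : Set (Mon n))
    (ρ : Mon n → MvPolynomial (Fin n) K) : List (Fin n) → MvPolynomial (Fin n) K
  | [] => 1
  | i :: L => piF B H ρ (X i * redList B H ρ L)

def DefinedOn {n : ℕ} {K : Type} [Field K] (B H : Set (Mon n))
    (p : MvPolynomial (Fin n) K) : Prop :=
  ↑p.support ⊆ B ∪ H

def RedDefined {n : ℕ} {K : Type} [Field K] (B H : Set (Mon n))
    (ρ : Mon n → MvPolynomial (Fin n) K) : List (Fin n) → Prop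
  | [] => True
  | i :: L => RedDefined B H ρ L ∧ DefinedOn B H (X i * redList B H ρ L)

def Eset {n : ℕ} {K : Type} [Field K] (B H : Set (Mon n))
    (ρ : Mon n → MvPolynomial (Fin n) K) : Set (Mon n) :=
  { m | ∀ L : List (Fin n), varsSum L = m → RedDefined B H ρ L }

/-
A factorisation of `m'` extends to one of `m` by multiplying in the variables of `m / m'` first;
the iterated reduction along the longer word is defined only if all its inner reductions are,
in particular the one along the factorisation of `m'`.
-/

lemma varsSum_eq_toFinsupp {n : ℕ} (L : List (Fin n)) :
    varsSum L = Multiset.toFinsupp (L : Multiset (Fin n)) := by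
  induction L with
  | nil => simp [varsSum]
  | cons i L ih =>
    rw [← Multiset.cons_coe, ← Multiset.singleton_add, Multiset.toFinsupp_add,
      Multiset.toFinsupp_singleton, ← ih]
    simp [varsSum]

lemma varsSum_append {n : ℕ} (L L' : List (Fin n)) :
    varsSum (L ++ L') = varsSum L + varsSum L' := by
  simp only [varsSum_eq_toFinsupp, ← Multiset.coe_add, Multiset.toFinsupp_add]

lemma exists_varsSum_eq {n : ℕ} (m : Mon n) : ∃ L : List (Fin n), varsSum L = m :=
  ⟨m.toMultiset.toList, by
    rw [varsSum_eq_toFinsupp, Multiset.coe_toList, Finsupp.toMultiset_toFinsupp]⟩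

lemma RedDefined.of_append {n : ℕ} {K : Type} [Field K] {B H : Set (Mon n)}
    {ρ : Mon n → MvPolynomial (Fin n) K} {L : List (Fin n)} :
    ∀ {L' : List (Fin n)}, RedDefined B H ρ (L' ++ L) → RedDefined B H ρ L
  | [], h => h
  | _ :: _, h => of_append h.1

theorem stmt5_general {n : ℕ} {K : Type} [Field K] (B H : Set (Mon n))
    (ρ : Mon n → MvPolynomial (Fin n) K) :
    ∀ m ∈ Eset B H ρ, ∀ m' : Mon n, m' ≤ m → m' ∈ Eset B H ρ := by
  intro m hm m' hle L hL
  obtain ⟨d, rfl⟩ := le_iff_exists_add.mp hle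
  obtain ⟨D, hD⟩ := exists_varsSum_eq d
  refine (hm (D ++ L) ?_).of_append
  rw [varsSum_append, hD, hL, add_comm]

/-- the set E of monomials on which all iterated reductions by the
    rewriting family are defined is stable under monomial division. -/
theorem stmt5 {n : ℕ} {K : Type} [Field K] (B H : Set (Mon n))
    (ρ : Mon n → MvPolynomial (Fin n) K)
    (hB : ConnectedTo1 B) (hH : H ⊆ border B)
    (hρ : ∀ h ∈ H, ↑(ρ h).support ⊆ B) :
    ∀ m ∈ Eset B H ρ, ∀ m' : Mon n, m' ≤ m → m' ∈ Eset B H ρ :=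
  stmt5_general B H ρ
end

section
/- Let Λ be a reducing grading and F a reducing family of degree λ for a set B connected to 1 (i.e., F is a rewriting family and every monomial of ∂B of degree ≤ λ is the leading monomial of some element of F). If every f ∈ F satisfies Λ(γ(f)) = Λ(f), then every monomial of degree ≤ λ lies in the set E of monomials on which all iterated reductions are defined; moreover each partial reduction p_k = π_F(x_{i_k} π_F(··· π_F(x_{i_1})···)) satisfies Λ(p_k) ≤ Λ(x_{i_k}···x_{i_1}). -/
open MvPolynomial
open scoped Classical

/-!
Induct on the word `x_{i_k} ⋯ x_{i_1}`. If the current reduction `p` is supported on `B` in degrees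
`≤ Λ(x_{i_{k-1}} ⋯ x_{i_1})`, then `x_{i_k} p` is supported on `B ∪ ∂B`, and by compatibility of the
grading with multiplication its monomials have degree `≤ Λ(x_{i_k} ⋯ x_{i_1}) ≤ λ`; so those in `∂B`
are leading monomials of `F` and the reduction is defined. Since `π_F` replaces such a monomial by a
polynomial supported on `B` of no larger degree, the bound propagates. The grading being reducing
makes `Λ` monotone along prefixes of the word, so the hypothesis `≤ λ` also propagates downwards.
-/

theorem le_deg_add_left {n : ℕ} {Λ : Type} [AddCommMonoid Λ] [PartialOrder Λ]
    [IsOrderedAddMonoid Λ] {deg : Mon n → Λ} (hdeg : ∀ a b : Mon n, deg (a + b) = deg a + deg b)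
    (hredgrad : ∀ a b : Mon n, a ≤ b → a ≠ b → deg a < deg b) (a b : Mon n) :
    deg a ≤ deg (b + a) := by
  have hb : deg 0 ≤ deg b := by
    rcases eq_or_ne 0 b with rfl | hne
    · exact le_rfl
    · exact (hredgrad 0 b zero_le hne).le
  calc deg a = deg (0 + a) := by rw [zero_add]
    _ = deg 0 + deg a := hdeg 0 a
    _ ≤ deg b + deg a := add_le_add_left hb _
    _ = deg (b + a) := (hdeg b a).symm

theorem varsSum_cons {n : ℕ} (i : Fin n) (L : List (Fin n)) :
    varsSum (i :: L) = Finsupp.single i 1 + varsSum L := by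
  simp [varsSum]

theorem single_add_mem_prolong {n : ℕ} {B : Set (Mon n)} {m : Mon n} (hm : m ∈ B) (i : Fin n) :
    Finsupp.single i 1 + m ∈ prolong B :=
  Or.inr (Set.mem_iUnion.2 ⟨i, m, hm, rfl⟩)

section Reduction

variable {n : ℕ} {K : Type} [Field K] {B H : Set (Mon n)} {ρ : Mon n → MvPolynomial (Fin n) K}
  {Λ : Type} {deg : Mon n → Λ}

theorem exists_of_mem_support_piF {p : MvPolynomial (Fin n) K} {m' : Mon n}
    (hm' : m' ∈ (piF B H ρ p).support) :
    ∃ m ∈ p.support, (m ∈ B ∧ m' = m) ∨ (m ∈ H ∧ m' ∈ (ρ m).support) := by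
  obtain ⟨m, hm, hterm⟩ := Finset.mem_biUnion.1 (support_sum hm')
  refine ⟨m, hm, ?_⟩
  by_cases hmB : m ∈ B
  · rw [if_pos hmB] at hterm
    exact Or.inl ⟨hmB, Finset.mem_singleton.1 (support_monomial_subset hterm)⟩
  · rw [if_neg hmB] at hterm
    by_cases hmH : m ∈ H
    · rw [if_pos hmH] at hterm
      exact Or.inr ⟨hmH, Finsupp.support_smul hterm⟩
    · simp [hmH] at hterm

theorem support_piF_subset [Preorder Λ] (hρ : ∀ h ∈ H, ↑(ρ h).support ⊆ B)
    (hlead : ∀ h ∈ H, ∀ m ∈ (ρ h).support, deg m ≤ deg h) {q : MvPolynomial (Fin n) K} {d : Λ}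
    (hq : ↑q.support ⊆ (B ∪ H) ∩ {m | deg m ≤ d}) :
    ↑(piF B H ρ q).support ⊆ B ∩ {m | deg m ≤ d} := by
  intro m' hm'
  obtain ⟨m, hm, ⟨hmB, rfl⟩ | ⟨hmH, hm'ρ⟩⟩ := exists_of_mem_support_piF hm'
  · exact ⟨hmB, (hq hm).2⟩
  · exact ⟨hρ m hmH hm'ρ, (hlead m hmH m' hm'ρ).trans (hq hm).2⟩

theorem support_X_mul_subset [AddCommMonoid Λ] [PartialOrder Λ] [IsOrderedAddMonoid Λ]
    (hdeg : ∀ a b : Mon n, deg (a + b) = deg a + deg b) {lam : Λ}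
    (hredfam : ∀ m ∈ border B, deg m ≤ lam → m ∈ H) {p : MvPolynomial (Fin n) K} {d : Λ}
    (hp : ↑p.support ⊆ B ∩ {m | deg m ≤ d}) (i : Fin n)
    (hd : deg (Finsupp.single i 1) + d ≤ lam) :
    ↑(X i * p).support ⊆ (B ∪ H) ∩ {m | deg m ≤ deg (Finsupp.single i 1) + d} := by
  intro m' hm'
  rw [support_X_mul, Finset.coe_map, Set.mem_image] at hm'
  obtain ⟨m, hm, rfl⟩ := hm'
  obtain ⟨hmB, hmd⟩ := hp hm
  have hdeg_m' : deg (Finsupp.single i 1 + m) ≤ deg (Finsupp.single i 1) + d := by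
    rw [hdeg]
    exact add_le_add_right hmd _
  refine ⟨?_, hdeg_m'⟩
  by_cases hB' : Finsupp.single i 1 + m ∈ B
  · exact Or.inl hB'
  · exact Or.inr (hredfam _ ⟨single_add_mem_prolong hmB i, hB'⟩ (hdeg_m'.trans hd))

theorem redDefined_and_support_redList_subset
    [AddCommMonoid Λ] [PartialOrder Λ] [IsOrderedAddMonoid Λ] (h0B : 0 ∈ B)
    (hdeg : ∀ a b : Mon n, deg (a + b) = deg a + deg b)
    (hredgrad : ∀ a b : Mon n, a ≤ b → a ≠ b → deg a < deg b) {lam : Λ}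
    (hρ : ∀ h ∈ H, ↑(ρ h).support ⊆ B)
    (hredfam : ∀ m ∈ border B, deg m ≤ lam → m ∈ H)
    (hlead : ∀ h ∈ H, ∀ m ∈ (ρ h).support, deg m ≤ deg h) :
    ∀ L : List (Fin n), deg (varsSum L) ≤ lam →
      RedDefined B H ρ L ∧ ↑(redList B H ρ L).support ⊆ B ∩ {m | deg m ≤ deg (varsSum L)}
  | [], _ => by
    refine ⟨trivial, fun m hm => ?_⟩
    obtain rfl : m = 0 := by simpa [redList] using hm
    exact ⟨h0B, le_rfl⟩
  | i :: L, hlam => by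
    have hL : deg (varsSum L) ≤ lam :=
      (le_deg_add_left hdeg hredgrad _ (Finsupp.single i 1)).trans (by rwa [← varsSum_cons])
    obtain ⟨hRD, hsupp⟩ :=
      redDefined_and_support_redList_subset h0B hdeg hredgrad hρ hredfam hlead L hL
    rw [varsSum_cons, hdeg] at hlam ⊢
    have hX := support_X_mul_subset hdeg hredfam hsupp i hlam
    exact ⟨⟨hRD, fun m hm => (hX hm).1⟩, support_piF_subset hρ hlead hX⟩

end Reduction

theorem stmt7_general {n : ℕ} {K : Type} [Field K] {Λ : Type} [AddCommMonoid Λ] [LinearOrder Λ] [IsOrderedAddMonoid Λ]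
    (deg : Mon n → Λ)
    (hdeg : ∀ a b : Mon n, deg (a + b) = deg a + deg b)
    (hredgrad : ∀ a b : Mon n, a ≤ b → a ≠ b → deg a < deg b)
    (B H : Set (Mon n)) (ρ : Mon n → MvPolynomial (Fin n) K) (lam : Λ)
    (hB : ConnectedTo1 B)
    (hρ : ∀ h ∈ H, ↑(ρ h).support ⊆ B)
    (hredfam : ∀ m ∈ border B, deg m ≤ lam → m ∈ H)
    (hlead : ∀ h ∈ H, ∀ m ∈ (ρ h).support, deg m ≤ deg h) :
    (∀ m : Mon n, deg m ≤ lam → m ∈ Eset B H ρ) ∧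
    (∀ L : List (Fin n), deg (varsSum L) ≤ lam →
      RedDefined B H ρ L ∧
      ∀ m' ∈ (redList B H ρ L).support, deg m' ≤ deg (varsSum L)) := by
  have key := redDefined_and_support_redList_subset hB.1 hdeg hredgrad hρ hredfam hlead
  refine ⟨fun m hm L hLm => (key L (hLm ▸ hm)).1, fun L hL => ⟨(key L hL).1, ?_⟩⟩
  exact fun m' hm' => ((key L hL).2 hm').2

/-- for a reducing family of degree λ (with respect to a reducing grading)
    whose leading monomials have maximal degree, every monomial of degree ≤ λ lies in E,
    and each partial reduction has degree bounded by the degree of the product reduced. -/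
theorem stmt7 {n : ℕ} {K : Type} [Field K] {Λ : Type} [AddCommMonoid Λ] [LinearOrder Λ] [IsOrderedAddMonoid Λ]
    (deg : Mon n → Λ)
    (hdeg : ∀ a b : Mon n, deg (a + b) = deg a + deg b)
    (hredgrad : ∀ a b : Mon n, a ≤ b → a ≠ b → deg a < deg b)
    (B H : Set (Mon n)) (ρ : Mon n → MvPolynomial (Fin n) K) (lam : Λ)
    (hB : ConnectedTo1 B) (hH : H ⊆ border B)
    (hρ : ∀ h ∈ H, ↑(ρ h).support ⊆ B)
    (hredfam : ∀ m ∈ border B, deg m ≤ lam → m ∈ H)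
    (hlead : ∀ h ∈ H, ∀ m ∈ (ρ h).support, deg m ≤ deg h) :
    (∀ m : Mon n, deg m ≤ lam → m ∈ Eset B H ρ) ∧
    (∀ L : List (Fin n), deg (varsSum L) ≤ lam →
      RedDefined B H ρ L ∧
      ∀ m' ∈ (redList B H ρ L).support, deg m' ≤ deg (varsSum L)) :=
  stmt7_general deg hdeg hredgrad B H ρ lam hB hρ hredfam hlead
end
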